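/- arXiv:1608.08454 — 4 statements merged into one kernel-verified Lean document; each statement's English description precedes it below -/
import Mathlib

section
/- Let A ∈ ℝ^{d×d} be a real symmetric positive definite matrix whose eigenvalues all lie in the interval [1−δ, 1+δ] for some δ ∈ [0,1). Then ‖A⁻¹‖_{∞→∞} ≤ (1 + √d·δ) / ((1+δ)(1−δ)). -/
open Matrix
open scoped BigOperators

/-- Maximum absolute row sum norm `‖·‖_{∞→∞}`. -/
noncomputable def infNorm {ι κ : Type*} [Fintype ι] [Fintype κ] (B : Matrix ι κ ℝ) : ℝ :=
  ⨆ j, ∑ k, |B j k|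

/-- Frobenius norm. -/
noncomputable def frobNorm {ι κ : Type*} [Fintype ι] [Fintype κ] (B : Matrix ι κ ℝ) : ℝ :=
  Real.sqrt (∑ j, ∑ k, (B j k)^2)

theorem stmt5 {d : ℕ} (A : Matrix (Fin d) (Fin d) ℝ) (hA : A.IsHermitian)
    (hpd : A.PosDef) (δ : ℝ) (hδ0 : 0 ≤ δ) (hδ1 : δ < 1)
    (heig : ∀ j, 1 - δ ≤ hA.eigenvalues j ∧ hA.eigenvalues j ≤ 1 + δ) :
    infNorm A⁻¹ ≤ (1 + Real.sqrt d * δ) / ((1 + δ) * (1 - δ)) := by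
  classical
  set U : Matrix (Fin d) (Fin d) ℝ := (hA.eigenvectorUnitary : Matrix (Fin d) (Fin d) ℝ) with hU
  set lam := hA.eigenvalues with hlam
  set α : ℝ := ((1 + δ) * (1 - δ))⁻¹ with hα
  have hden : (0:ℝ) < (1 + δ) * (1 - δ) := by nlinarith
  have hαpos : 0 < α := inv_pos.mpr hden
  have hlampos : ∀ i, 0 < lam i := fun i => lt_of_lt_of_le (by linarith) (heig i).1
  have hUU : U * star U = 1 := (Matrix.mem_unitaryGroup_iff).mp (hA.eigenvectorUnitary).2
  have hsUU : star U * U = 1 := (Matrix.mem_unitaryGroup_iff').mp (hA.eigenvectorUnitary).2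
  have hUUt : ∀ j k, ∑ i, U j i * U k i = if j = k then 1 else 0 := by
    intro j k
    have := congrFun (congrFun hUU j) k
    simpa [Matrix.mul_apply, Matrix.star_apply, Matrix.one_apply] using this
  have hUtU : ∀ i l, ∑ k, U k i * U k l = if i = l then 1 else 0 := by
    intro i l
    have := congrFun (congrFun hsUU i) l
    simpa [Matrix.mul_apply, Matrix.star_apply, Matrix.one_apply] using this
  have hsd : A = U * Matrix.diagonal lam * star U := by
    simpa using hA.spectral_theorem
  set C : Matrix (Fin d) (Fin d) ℝ := U * Matrix.diagonal (fun i => (lam i)⁻¹) * star U with hC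
  have hDi : Matrix.diagonal lam * Matrix.diagonal (fun i => (lam i)⁻¹) = 1 := by
    rw [Matrix.diagonal_mul_diagonal]
    have : (fun i => lam i * (lam i)⁻¹) = fun _ => (1:ℝ) := by
      funext i; exact mul_inv_cancel₀ (hlampos i).ne'
    rw [this, Matrix.diagonal_one]
  have hAC : A * C = 1 := by
    rw [hsd, hC]
    simp only [Matrix.mul_assoc]
    rw [← Matrix.mul_assoc (star U) U, hsUU, Matrix.one_mul,
      ← Matrix.mul_assoc (Matrix.diagonal lam), hDi, Matrix.one_mul, hUU]
  have hinv : A⁻¹ = C := Matrix.inv_eq_right_inv hAC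
  have hCent : ∀ j k, C j k = ∑ i, U j i * (lam i)⁻¹ * U k i := by
    intro j k
    simp [hC, Matrix.mul_apply, Matrix.diagonal_apply, mul_ite, mul_zero,
      Finset.sum_ite_eq', Matrix.star_apply]
  set g : Fin d → ℝ := fun i => (lam i)⁻¹ - α with hgdef
  set B : Fin d → Fin d → ℝ := fun j k => ∑ i, U j i * g i * U k i with hB
  have hg : ∀ i, |g i| ≤ δ * α := by
    intro i
    have h1 : (lam i)⁻¹ ≤ (1 - δ)⁻¹ := by
      apply inv_anti₀ (by linarith) (heig i).1
    have h2 : (1 + δ)⁻¹ ≤ (lam i)⁻¹ := by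
      apply inv_anti₀ (hlampos i) (heig i).2
    have hne1 : (1:ℝ) - δ ≠ 0 := by linarith
    have hne2 : (1:ℝ) + δ ≠ 0 := by linarith
    have e1 : (1 - δ)⁻¹ = α + δ * α := by
      rw [hα]; field_simp
    have e2 : (1 + δ)⁻¹ = α - δ * α := by
      rw [hα]; field_simp
    rw [abs_le]; constructor <;> simp only [hgdef] <;> linarith
  have hCdecomp : ∀ j k, C j k = α * (if j = k then 1 else 0) + B j k := by
    intro j k
    calc C j k = ∑ i, (U j i * g i * U k i + α * (U j i * U k i)) := by
          rw [hCent]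
          refine Finset.sum_congr rfl fun i _ => ?_
          simp only [hgdef]; ring
      _ = B j k + α * ∑ i, U j i * U k i := by
          rw [Finset.sum_add_distrib, Finset.mul_sum, hB]
      _ = α * (if j = k then 1 else 0) + B j k := by rw [hUUt]; ring
  have hrownorm : ∀ j, ∑ i, (U j i)^2 = 1 := by
    intro j
    have := hUUt j j
    simp only [if_pos rfl] at this
    simpa [sq] using this
  have hrow2 : ∀ j, ∑ k, (B j k)^2 ≤ (δ * α)^2 := by
    intro j
    have key : ∀ i l, ∑ k, (U j i * g i * U k i) * (U j l * g l * U k l)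
        = (U j i * g i) * (U j l * g l) * (if i = l then 1 else 0) := by
      intro i l
      rw [← hUtU i l, Finset.mul_sum]
      exact Finset.sum_congr rfl fun k _ => by ring
    have hexp : ∑ k, (B j k)^2 = ∑ i, (g i)^2 * (U j i)^2 := by
      calc ∑ k, (B j k)^2
          = ∑ k, ∑ i, ∑ l, (U j i * g i * U k i) * (U j l * g l * U k l) := by
            refine Finset.sum_congr rfl fun k _ => ?_
            rw [sq, hB]
            rw [Finset.sum_mul_sum]
        _ = ∑ i, ∑ l, ∑ k, (U j i * g i * U k i) * (U j l * g l * U k l) := by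
            rw [Finset.sum_comm]
            exact Finset.sum_congr rfl fun i _ => Finset.sum_comm
        _ = ∑ i, ∑ l, (U j i * g i) * (U j l * g l) * (if i = l then 1 else 0) :=
            Finset.sum_congr rfl fun i _ => Finset.sum_congr rfl fun l _ => key i l
        _ = ∑ i, (g i)^2 * (U j i)^2 := by
            refine Finset.sum_congr rfl fun i _ => ?_
            simp only [mul_ite, mul_one, mul_zero, Finset.sum_ite_eq, Finset.mem_univ, if_true]
            ring
    rw [hexp]
    calc ∑ i, (g i)^2 * (U j i)^2
        ≤ ∑ i, (δ * α)^2 * (U j i)^2 := by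
          refine Finset.sum_le_sum fun i _ => ?_
          refine mul_le_mul_of_nonneg_right ?_ (sq_nonneg _)
          calc (g i)^2 = |g i|^2 := (sq_abs _).symm
            _ ≤ (δ * α)^2 := by
                refine pow_le_pow_left₀ (abs_nonneg _) (hg i) 2
      _ = (δ * α)^2 * ∑ i, (U j i)^2 := (Finset.mul_sum _ _ _).symm
      _ = (δ * α)^2 := by rw [hrownorm j, mul_one]
  -- row sum bound for B
  have hrowB : ∀ j, ∑ k, |B j k| ≤ Real.sqrt d * (δ * α) := by
    intro j
    have hcs : (∑ k, |B j k|)^2 ≤ (d : ℝ) * (δ * α)^2 := by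
      have h1 : (∑ k, |B j k|)^2 ≤ (d : ℝ) * ∑ k, |B j k|^2 := by
        simpa using sq_sum_le_card_mul_sum_sq (s := (Finset.univ : Finset (Fin d)))
          (f := fun k => |B j k|)
      have h2 : ∑ k, |B j k|^2 = ∑ k, (B j k)^2 := by
        exact Finset.sum_congr rfl fun k _ => sq_abs _
      rw [h2] at h1
      calc (∑ k, |B j k|)^2 ≤ (d : ℝ) * ∑ k, (B j k)^2 := h1
        _ ≤ (d : ℝ) * (δ * α)^2 :=
            mul_le_mul_of_nonneg_left (hrow2 j) (Nat.cast_nonneg d)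
    have hnn : 0 ≤ ∑ k, |B j k| := Finset.sum_nonneg fun k _ => abs_nonneg _
    calc ∑ k, |B j k| ≤ Real.sqrt ((d : ℝ) * (δ * α)^2) :=
          Real.le_sqrt_of_sq_le hcs
      _ = Real.sqrt d * (δ * α) := by
          rw [Real.sqrt_mul (Nat.cast_nonneg d), Real.sqrt_sq (by positivity)]
  -- row sum bound for C
  have hrowC : ∀ j, ∑ k, |C j k| ≤ α + Real.sqrt d * (δ * α) := by
    intro j
    have h1 : ∑ k, |C j k| ≤ ∑ k, ((α * if j = k then 1 else 0) + |B j k|) := by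
      refine Finset.sum_le_sum fun k _ => ?_
      rw [hCdecomp j k]
      refine (abs_add_le _ _).trans ?_
      have : |α * if j = k then 1 else 0| = α * if j = k then 1 else 0 := by
        split_ifs <;> simp [abs_of_nonneg hαpos.le]
      rw [this]
    have h2 : ∑ k, ((α * if j = k then 1 else 0) + |B j k|) = α + ∑ k, |B j k| := by
      rw [Finset.sum_add_distrib]
      congr 1
      simp [mul_ite, Finset.sum_ite_eq, Finset.mem_univ]
    calc ∑ k, |C j k| ≤ α + ∑ k, |B j k| := by rw [← h2]; exact h1
      _ ≤ α + Real.sqrt d * (δ * α) := by linarith [hrowB j]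
  -- conclude
  have hfinal : α + Real.sqrt d * (δ * α) = (1 + Real.sqrt d * δ) / ((1 + δ) * (1 - δ)) := by
    rw [hα, div_eq_mul_inv]; ring
  rw [infNorm, hinv]
  refine Real.iSup_le (fun j => ?_) ?_
  · rw [← hfinal]; exact hrowC j
  · exact div_nonneg (by positivity) hden.le
end

section
/- Let Φ ∈ ℝ^{m×n} satisfy the restricted isometry property of order |S| with constant δ_{|S|} < 1 for a support set S ⊆ [n]. Let X ∈ ℝ^{n×K} with supp(X) ⊆ S and Y = ΦX. Suppose S_t ⊂ S is a set of t previously selected indices, P = Φ_{S_t} Φ_{S_t}⁺ is the orthogonal projector onto the column span of Φ_{S_t}, R = (I − P)Y is the residual, and J_t = S \ S_t. Then ‖Φ_Sᵀ R‖_{∞→∞} ≥ ((1−δ_{|S|})(1+δ_{|S|}) / (1 + √(|S|−t) · δ_{|S|})) · ‖X^{J_t}‖_{∞→∞}. -/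
open Matrix
open scoped BigOperators

/-- A vector is `s`-sparse if its support fits in a set of at most `s` indices. -/
def Sparse {n : ℕ} (s : ℕ) (u : Fin n → ℝ) : Prop :=
  ∃ T : Finset (Fin n), T.card ≤ s ∧ ∀ j ∉ T, u j = 0

/-- Restricted isometry property of order `s` with constant `δ`. -/
def RIP {m n : ℕ} (Φ : Matrix (Fin m) (Fin n) ℝ) (s : ℕ) (δ : ℝ) : Prop :=
  ∀ u : Fin n → ℝ, Sparse s u →
    (1 - δ) * ∑ j, (u j)^2 ≤ ∑ i, (Φ.mulVec u i)^2 ∧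
    ∑ i, (Φ.mulVec u i)^2 ≤ (1 + δ) * ∑ j, (u j)^2

/-- Submatrix of the columns of `Φ` indexed by `S`. -/
noncomputable def colSub {m n : ℕ} (Φ : Matrix (Fin m) (Fin n) ℝ) (S : Finset (Fin n)) :
    Matrix (Fin m) {j // j ∈ S} ℝ := Matrix.of fun i j => Φ i j.1

/-- Submatrix of the rows of `X` indexed by `S`. -/
noncomputable def rowSub {n K : ℕ} (X : Matrix (Fin n) (Fin K) ℝ) (S : Finset (Fin n)) :
    Matrix {j // j ∈ S} (Fin K) ℝ := Matrix.of fun j k => X j.1 k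


lemma aux_exists_approx_inverse {ι : Type*} [Fintype ι] [DecidableEq ι]
    (A : Matrix ι ι ℝ) (hAT : Aᵀ = A) (δ : ℝ) (hδ0 : 0 ≤ δ) (hδ1 : δ < 1)
    (hq : ∀ y : ι → ℝ, (1-δ) * (y ⬝ᵥ y) ≤ y ⬝ᵥ (A *ᵥ y) ∧ y ⬝ᵥ (A *ᵥ y) ≤ (1+δ) * (y ⬝ᵥ y))
    (j : ι) :
    ∃ v : ι → ℝ, (∑ i, (v i)^2 ≤ (δ/(1-δ^2))^2) ∧
      ∀ x : ι → ℝ, x j = v ⬝ᵥ (A *ᵥ x) + (1/(1-δ^2)) * (A *ᵥ x) j := by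
  have hA : A.IsHermitian := by
    rw [Matrix.IsHermitian, conjTranspose_eq_transpose_of_trivial, hAT]
  set U : Matrix ι ι ℝ := (hA.eigenvectorUnitary : Matrix ι ι ℝ) with hU
  set W : Matrix ι ι ℝ := star U with hW
  have h1 : W * U = 1 := Unitary.coe_star_mul_self _
  have h2 : U * W = 1 := Unitary.coe_mul_star_self _
  have hWT : W = Uᵀ := by
    rw [hW, Matrix.star_eq_conjTranspose, conjTranspose_eq_transpose_of_trivial]
  set lam : ι → ℝ := hA.eigenvalues with hlam
  have hspec : A * U = U * Matrix.diagonal lam := by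
    have := hA.spectral_theorem
    have h3 : Matrix.diagonal (RCLike.ofReal ∘ lam) = Matrix.diagonal lam := by
      ext i k; simp [Matrix.diagonal]
    rw [h3] at this
    rw [Unitary.conjStarAlgAut_apply] at this
    calc A * U = (U * Matrix.diagonal lam * W) * U := by rw [← this]
    _ = U * Matrix.diagonal lam * (W * U) := by rw [mul_assoc]
    _ = U * Matrix.diagonal lam := by rw [h1, mul_one]
  -- eigenvalue facts
  have hcolnorm : ∀ i, (fun k => U k i) ⬝ᵥ (fun k => U k i) = 1 := by
    intro i
    have : (W * U) i i = (1 : Matrix ι ι ℝ) i i := by rw [h1]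
    simpa [Matrix.mul_apply, hWT, dotProduct, Matrix.one_apply, mul_comm] using this
  have hAcol : ∀ i, A *ᵥ (fun k => U k i) = lam i • (fun k => U k i) := by
    intro i
    funext k
    have : (A * U) k i = (U * Matrix.diagonal lam) k i := by rw [hspec]
    simpa [Matrix.mul_apply, Matrix.mulVec, dotProduct, Matrix.diagonal,
      Finset.sum_ite_eq, mul_comm] using this
  have hlamlb : ∀ i, 1 - δ ≤ lam i := by
    intro i
    have h := (hq (fun k => U k i)).1
    rw [hAcol i, dotProduct_smul, hcolnorm i] at h
    simpa using h
  have hlamub : ∀ i, lam i ≤ 1 + δ := by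
    intro i
    have h := (hq (fun k => U k i)).2
    rw [hAcol i, dotProduct_smul, hcolnorm i] at h
    simpa using h
  have hlampos : ∀ i, 0 < lam i := fun i => lt_of_lt_of_le (by linarith) (hlamlb i)
  have hd2 : (0:ℝ) < 1 - δ^2 := by nlinarith
  have hUnorm : ∀ (V : Matrix ι ι ℝ), Vᵀ * V = 1 → ∀ a b : ι → ℝ,
      (V *ᵥ a) ⬝ᵥ (V *ᵥ b) = a ⬝ᵥ b := by
    intro V hV a b
    rw [Matrix.dotProduct_mulVec, ← Matrix.vecMul_transpose, Matrix.vecMul_vecMul, hV,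
      Matrix.vecMul_one]
  have hUU : Uᵀ * U = 1 := by rw [← hWT]; exact h1
  have hWW : Wᵀ * W = 1 := by rw [hWT, Matrix.transpose_transpose]; exact h2
  set c : ℝ := 1/(1-δ^2) with hc
  set e : ι → ℝ := Pi.single j 1 with he
  set cj : ι → ℝ := W *ᵥ e with hcj
  set g : ι → ℝ := fun i => (1/lam i - c) * cj i with hg
  set v : ι → ℝ := U *ᵥ g with hv
  have hmulV : ∀ h : ι → ℝ, A *ᵥ (U *ᵥ h) = U *ᵥ (fun i => lam i * h i) := by
    intro h
    have hd : Matrix.diagonal lam *ᵥ h = fun i => lam i * h i := by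
      funext i
      exact Matrix.mulVec_diagonal lam h i
    rw [Matrix.mulVec_mulVec, hspec, ← Matrix.mulVec_mulVec, hd]
  have hUcj : U *ᵥ cj = e := by
    rw [hcj, Matrix.mulVec_mulVec, h2, Matrix.one_mulVec]
  set w : ι → ℝ := U *ᵥ (fun i => cj i / lam i) with hw
  have hAw : A *ᵥ w = e := by
    rw [hw, hmulV]
    have : (fun i => lam i * (cj i / lam i)) = cj := by
      funext i
      rw [mul_comm, div_mul_cancel₀ _ (hlampos i).ne']
    rw [this, hUcj]
  have hwve : w = v + c • e := by
    have hsplit : (fun i => cj i / lam i) = g + fun i => c * cj i := by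
      funext i
      have hli := (hlampos i).ne'
      simp only [hg, Pi.add_apply]
      field_simp
      ring
    rw [hw, hsplit, Matrix.mulVec_add, ← hv]
    congr 1
    have : (fun i => c * cj i) = c • cj := by funext i; simp
    rw [this, Matrix.mulVec_smul, hUcj]
  refine ⟨v, ?_, ?_⟩
  · -- norm bound
    have hvv : ∑ i, (v i)^2 = g ⬝ᵥ g := by
      rw [show ∑ i, (v i)^2 = v ⬝ᵥ v from by simp [dotProduct, pow_two], hv,
        hUnorm U hUU]
    have hcjcj : cj ⬝ᵥ cj = 1 := by
      rw [hcj, hUnorm W hWW, he]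
      have hps : ∀ x : ι, (Pi.single j 1 : ι → ℝ) x * (Pi.single j 1 : ι → ℝ) x
          = if x = j then (1:ℝ) else 0 := by
        intro x
        by_cases h : x = j <;> simp [Pi.single_apply, h]
      rw [dotProduct]
      simp [hps]
    have hfac : ∀ i, (1/lam i - c)^2 ≤ (δ * c)^2 := by
      intro i
      have hl1 : (0:ℝ) < 1 - δ := by linarith
      have hl2 : (0:ℝ) < 1 + δ := by linarith
      have ht1 : 1/lam i ≤ 1/(1-δ) := one_div_le_one_div_of_le hl1 (hlamlb i)
      have ht2 : 1/(1+δ) ≤ 1/lam i := one_div_le_one_div_of_le (hlampos i) (hlamub i)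
      have he1 : 1/(1-δ) - c = δ * c := by
        rw [hc]; field_simp; ring
      have he2 : c - 1/(1+δ) = δ * c := by
        rw [hc]; field_simp; ring
      have habs1 : 1/lam i - c ≤ δ * c := by linarith
      have habs2 : -(δ * c) ≤ 1/lam i - c := by linarith
      exact sq_le_sq' habs2 habs1
    have : g ⬝ᵥ g ≤ (δ * c)^2 * (cj ⬝ᵥ cj) := by
      rw [dotProduct, dotProduct, Finset.mul_sum]
      apply Finset.sum_le_sum
      intro i _
      have h1' : g i * g i = (1/lam i - c)^2 * (cj i * cj i) := by
        simp only [hg]; ring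
      have h2' : (cj i) * (cj i) = (cj i)^2 := by ring
      rw [h1', h2']
      apply mul_le_mul_of_nonneg_right (hfac i) (sq_nonneg _)
    rw [hvv]
    calc g ⬝ᵥ g ≤ (δ * c)^2 * (cj ⬝ᵥ cj) := this
    _ = (δ/(1-δ^2))^2 := by rw [hcjcj, hc]; field_simp
  · intro x
    have hxj : x j = e ⬝ᵥ x := by rw [he, single_dotProduct, one_mul]
    have hsym : e ⬝ᵥ x = w ⬝ᵥ (A *ᵥ x) := by
      rw [← hAw, ← Matrix.vecMul_transpose, hAT, ← Matrix.dotProduct_mulVec]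
    rw [hxj, hsym, hwve, add_dotProduct, smul_dotProduct]
    congr 1
    rw [smul_eq_mul, he, single_dotProduct, one_mul]

open Matrix in
lemma aux_proj_sq {m : ℕ} (Q : Matrix (Fin m) (Fin m) ℝ) (hQT : Qᵀ = Q) (hQQ : Q * Q = Q)
    (f : Fin m → ℝ) : f ⬝ᵥ (Q *ᵥ f) = (Q *ᵥ f) ⬝ᵥ (Q *ᵥ f) := by
  conv_rhs => rw [Matrix.dotProduct_mulVec]
  rw [show Q *ᵥ f = f ᵥ* Qᵀ from (Matrix.vecMul_transpose Q f).symm]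
  rw [Matrix.vecMul_vecMul, hQT, hQQ, ← Matrix.dotProduct_mulVec,
    show f ᵥ* Q = Q *ᵥ f from by
      conv_lhs => rw [← hQT]
      exact Matrix.vecMul_transpose Q f]

set_option maxHeartbeats 1600000 in
/-- Theorem 1 (main contribution): lower bound on the maximal SOMP metric over correct atoms. -/
theorem stmt6 {m n K : ℕ} (Φ : Matrix (Fin m) (Fin n) ℝ)
    (S St : Finset (Fin n)) (δ : ℝ) (hδ0 : 0 ≤ δ) (hδ1 : δ < 1)
    (hRIP : RIP Φ S.card δ)
    (X : Matrix (Fin n) (Fin K) ℝ) (hsupp : ∀ j ∉ S, ∀ k, X j k = 0)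
    (hSt : St ⊂ S)
    (P : Matrix (Fin m) (Fin m) ℝ)
    (hPsymm : P.IsHermitian) (hPidem : P * P = P)
    (hPfix : ∀ j ∈ St, P.mulVec (fun i => Φ i j) = fun i => Φ i j)
    (hPrange : ∀ z : Fin m → ℝ, ∃ c : Fin n → ℝ, (∀ j ∉ St, c j = 0) ∧
      P.mulVec z = Φ.mulVec c)
    (R : Matrix (Fin m) (Fin K) ℝ) (hR : R = (1 - P) * (Φ * X)) :
    ((1 - δ) * (1 + δ) / (1 + Real.sqrt ((S.card : ℝ) - St.card) * δ)) *
        infNorm (rowSub X (S \ St)) ≤ infNorm ((colSub Φ S)ᵀ * R) := by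
  classical
  have hd2 : (0:ℝ) < 1 - δ^2 := by nlinarith
  -- basic sets
  have hJne : (S \ St).Nonempty := Finset.sdiff_nonempty.mpr hSt.2
  have hne : Nonempty {j // j ∈ S \ St} := ⟨⟨hJne.choose, hJne.choose_spec⟩⟩
  have hStS : St ⊆ S := hSt.1
  -- matrices
  set B : Matrix (Fin m) {j // j ∈ S \ St} ℝ := colSub Φ (S \ St) with hB
  set Q : Matrix (Fin m) (Fin m) ℝ := 1 - P with hQ
  set A : Matrix {j // j ∈ S \ St} {j // j ∈ S \ St} ℝ := Bᵀ * Q * B with hA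
  have hPT : Pᵀ = P := by
    rw [← Matrix.conjTranspose_eq_transpose_of_trivial]; exact hPsymm
  have hQT : Qᵀ = Q := by
    rw [hQ, Matrix.transpose_sub, Matrix.transpose_one, hPT]
  have hQQ : Q * Q = Q := by
    rw [hQ]
    noncomm_ring [hPidem]
  have hAT : Aᵀ = A := by
    rw [hA, Matrix.transpose_mul, Matrix.transpose_mul, Matrix.transpose_transpose, hQT,
      ← Matrix.mul_assoc]
  -- extension of vectors on J to Fin n
  set ext : ({j // j ∈ S \ St} → ℝ) → (Fin n → ℝ) :=
    fun y a => if h : a ∈ S \ St then y ⟨a, h⟩ else 0 with hext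
  have hsumJ : ∀ (f : Fin n → ℝ), (∀ a ∉ S \ St, f a = 0) →
      ∑ a, f a = ∑ i : {j // j ∈ S \ St}, f i.1 := by
    intro f hf
    rw [← Finset.sum_subset (Finset.subset_univ (S \ St)) (fun x _ hx => hf x hx)]
    exact Finset.sum_subtype _ (fun x => Iff.rfl) f
  have hBy : ∀ y, B *ᵥ y = Φ *ᵥ (ext y) := by
    intro y
    funext a
    show ∑ i : {j // j ∈ S \ St}, B a i * y i = ∑ t, Φ a t * ext y t
    rw [hsumJ (fun t => Φ a t * ext y t) (by
      intro t ht
      simp only [hext]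
      rw [dif_neg ht, mul_zero])]
    apply Finset.sum_congr rfl
    intro i _
    simp only [hB, hext, colSub, Matrix.of_apply, dif_pos i.2]
  have hext2 : ∀ y, ∑ a, (ext y a)^2 = y ⬝ᵥ y := by
    intro y
    rw [hsumJ (fun a => (ext y a)^2) (by
      intro a ha
      simp only [hext]
      rw [dif_neg ha]
      norm_num)]
    rw [dotProduct]
    apply Finset.sum_congr rfl
    intro i _
    simp only [hext, dif_pos i.2]
    ring
  have hextS : ∀ y, ∀ a ∉ S, ext y a = 0 := by
    intro y a ha
    simp only [hext]
    rw [dif_neg (fun h => ha (Finset.mem_sdiff.mp h).1)]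
  -- quadratic form bounds
  have hq : ∀ y : {j // j ∈ S \ St} → ℝ,
      (1-δ) * (y ⬝ᵥ y) ≤ y ⬝ᵥ (A *ᵥ y) ∧ y ⬝ᵥ (A *ᵥ y) ≤ (1+δ) * (y ⬝ᵥ y) := by
    intro y
    set f : Fin m → ℝ := B *ᵥ y with hf
    have hAy : y ⬝ᵥ (A *ᵥ y) = f ⬝ᵥ (Q *ᵥ f) := by
      rw [hA, ← Matrix.mulVec_mulVec, ← Matrix.mulVec_mulVec,
        Matrix.dotProduct_mulVec, Matrix.vecMul_transpose]
    have hPf : ∀ g : Fin m → ℝ, 0 ≤ g ⬝ᵥ (P *ᵥ g) := by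
      intro g
      rw [aux_proj_sq P hPT hPidem g]
      exact Finset.sum_nonneg (fun a _ => mul_self_nonneg _)
    have hup : y ⬝ᵥ (A *ᵥ y) ≤ (1+δ) * (y ⬝ᵥ y) := by
      have h1 : y ⬝ᵥ (A *ᵥ y) ≤ f ⬝ᵥ f := by
        rw [hAy, hQ, Matrix.sub_mulVec, Matrix.one_mulVec, dotProduct_sub]
        have := hPf f
        linarith
      have h2 : f ⬝ᵥ f = ∑ a, ((Φ *ᵥ ext y) a)^2 := by
        rw [hf, hBy y, dotProduct]
        apply Finset.sum_congr rfl
        intro a _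
        ring
      have h3 := (hRIP (ext y) ⟨S, le_refl _, hextS y⟩).2
      rw [hext2 y] at h3
      calc y ⬝ᵥ (A *ᵥ y) ≤ f ⬝ᵥ f := h1
      _ = ∑ a, ((Φ *ᵥ ext y) a)^2 := h2
      _ ≤ (1+δ) * (y ⬝ᵥ y) := h3
    have hlow : (1-δ) * (y ⬝ᵥ y) ≤ y ⬝ᵥ (A *ᵥ y) := by
      obtain ⟨c, hc0, hcP⟩ := hPrange f
      have hQf : Q *ᵥ f = Φ *ᵥ (ext y - c) := by
        rw [hQ, Matrix.sub_mulVec, Matrix.one_mulVec, hcP]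
        rw [show f = Φ *ᵥ ext y from by rw [hf, hBy y]]
        rw [Matrix.mulVec_sub]
      have hsparse : Sparse S.card (ext y - c) := by
        refine ⟨S, le_refl _, ?_⟩
        intro a ha
        have h1 := hextS y a ha
        have h2 := hc0 a (fun h => ha (hStS h))
        simp [h1, h2]
      have h3 := (hRIP (ext y - c) hsparse).1
      have h4 : ∑ a, (ext y a)^2 ≤ ∑ a, ((ext y - c) a)^2 := by
        apply Finset.sum_le_sum
        intro a _
        by_cases h : a ∈ S \ St
        · have : c a = 0 := hc0 a (Finset.mem_sdiff.mp h).2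
          simp [this]
        · simp only [hext, Pi.sub_apply]
          rw [dif_neg h]
          simp [sq_nonneg]
      have h5 : y ⬝ᵥ (A *ᵥ y) = ∑ a, ((Φ *ᵥ (ext y - c)) a)^2 := by
        rw [hAy, aux_proj_sq Q hQT hQQ f, hQf, dotProduct]
        apply Finset.sum_congr rfl
        intro a _
        ring
      rw [h5]
      calc (1-δ) * (y ⬝ᵥ y) = (1-δ) * ∑ a, (ext y a)^2 := by rw [hext2 y]
      _ ≤ (1-δ) * ∑ a, ((ext y - c) a)^2 := by
          apply mul_le_mul_of_nonneg_left h4 (by linarith)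
      _ ≤ ∑ a, ((Φ *ᵥ (ext y - c)) a)^2 := h3
    exact ⟨hlow, hup⟩
  -- the key matrix identity : R = Q * (B * X')
  set X' : Matrix {j // j ∈ S \ St} (Fin K) ℝ := rowSub X (S \ St) with hX'
  have hcol : ∀ {α β γ : Type} [Fintype β] (M : Matrix γ β ℝ) (N : Matrix β α ℝ)
      (k : α), (fun a => (M*N) a k) = M *ᵥ (fun b => N b k) := by
    intro α β γ _ M N k
    funext a
    rw [Matrix.mul_apply, Matrix.mulVec, dotProduct]
  have hRBX : R = Q * (B * X') := by
    rw [hR]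
    ext a k
    have h1 : (Q * (Φ * X)) a k = (Q *ᵥ (fun b => (Φ * X) b k)) a := by
      rw [← hcol]
    have h2 : (Q * (B * X')) a k = (Q *ᵥ (fun b => (B * X') b k)) a := by
      rw [← hcol]
    rw [h1, h2]
    have h3 : (fun b => (Φ * X) b k) = Φ *ᵥ (fun t => X t k) := hcol Φ X k
    have h4 : (fun b => (B * X') b k) = B *ᵥ (fun i => X' i k) := hcol B X' k
    rw [h3, h4]
    -- decompose the column of X
    set gk : Fin n → ℝ := fun t => if t ∈ St then X t k else 0 with hgk
    have hdec : (fun t => X t k) = ext (fun i => X' i k) + gk := by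
      funext t
      simp only [Pi.add_apply, hext, hgk, hX', rowSub, Matrix.of_apply]
      by_cases h1 : t ∈ S \ St
      · rw [dif_pos h1, if_neg (Finset.mem_sdiff.mp h1).2]
        simp
      · rw [dif_neg h1]
        by_cases h2 : t ∈ St
        · rw [if_pos h2]; simp
        · rw [if_neg h2]
          have : t ∉ S := by
            intro hts
            exact h1 (Finset.mem_sdiff.mpr ⟨hts, h2⟩)
          simp [hsupp t this k]
    have hPgk : P *ᵥ (Φ *ᵥ gk) = Φ *ᵥ gk := by
      have hsum : Φ *ᵥ gk = ∑ t ∈ St, (X t k) • (fun a => Φ a t) := by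
        funext a
        rw [Matrix.mulVec, dotProduct, Finset.sum_apply]
        rw [← Finset.sum_subset (Finset.subset_univ St) (by
          intro x _ hx
          simp only [hgk]
          rw [if_neg hx, mul_zero])]
        apply Finset.sum_congr rfl
        intro t ht
        simp only [hgk, Pi.smul_apply, smul_eq_mul]
        rw [if_pos ht]
        ring
      rw [hsum]
      have : P *ᵥ (∑ t ∈ St, (X t k) • (fun a => Φ a t))
          = ∑ t ∈ St, (X t k) • (P *ᵥ (fun a => Φ a t)) := by
        rw [← Matrix.mulVecLin_apply, map_sum]
        simp [Matrix.mulVecLin_apply, Matrix.mulVec_smul]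
      rw [this]
      apply Finset.sum_congr rfl
      intro t ht
      rw [hPfix t ht]
    have hQgk : Q *ᵥ (Φ *ᵥ gk) = 0 := by
      rw [hQ, Matrix.sub_mulVec, Matrix.one_mulVec, hPgk, sub_self]
    rw [hdec, Matrix.mulVec_add, Matrix.mulVec_add, hQgk, add_zero, hBy]
  -- rows of A * X' are rows of the target matrix
  set Y : Matrix {j // j ∈ S \ St} (Fin K) ℝ := A * X' with hY
  have hYBt : Y = Bᵀ * R := by
    rw [hY, hA, hRBX, Matrix.mul_assoc, Matrix.mul_assoc]
  have hrow : ∀ (i : {j // j ∈ S \ St}) (k : Fin K),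
      Y i k = ((colSub Φ S)ᵀ * R) ⟨i.1, (Finset.mem_sdiff.mp i.2).1⟩ k := by
    intro i k
    rw [hYBt, Matrix.mul_apply, Matrix.mul_apply]
    apply Finset.sum_congr rfl
    intro a _
    simp only [hB, colSub, Matrix.transpose_apply, Matrix.of_apply]
  set N : ℝ := infNorm ((colSub Φ S)ᵀ * R) with hN
  have hrowN : ∀ i : {j // j ∈ S \ St}, ∑ k, |Y i k| ≤ N := by
    intro i
    have h1 : ∑ k, |Y i k| = ∑ k, |((colSub Φ S)ᵀ * R) ⟨i.1, (Finset.mem_sdiff.mp i.2).1⟩ k| := by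
      apply Finset.sum_congr rfl
      intro k _
      rw [hrow i k]
    rw [h1, hN, infNorm]
    exact le_ciSup (f := fun j' : {j // j ∈ S} => ∑ k, |((colSub Φ S)ᵀ * R) j' k|)
      (Set.Finite.bddAbove (Set.finite_range _))
      (⟨i.1, (Finset.mem_sdiff.mp i.2).1⟩ : {j // j ∈ S})
  have hN0 : 0 ≤ N := by
    obtain ⟨i⟩ := hne
    exact le_trans (Finset.sum_nonneg fun k _ => abs_nonneg _) (hrowN i)
  -- cardinality
  set s : ℕ := (S \ St).card with hs
  have hcard : Fintype.card {j // j ∈ S \ St} = s := Fintype.card_coe _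
  have hscast : ((S.card : ℝ) - St.card) = (s : ℝ) := by
    rw [hs, Finset.card_sdiff_of_subset hStS]
    rw [Nat.cast_sub (Finset.card_le_card hStS)]
  -- main per-row estimate
  have hmain : ∀ j : {j // j ∈ S \ St},
      ∑ k, |X' j k| ≤ ((1 + Real.sqrt s * δ)/(1-δ^2)) * N := by
    intro j
    obtain ⟨v, hv1, hv2⟩ := aux_exists_approx_inverse A hAT δ hδ0 hδ1 hq j
    have hXjk : ∀ k, X' j k = (∑ i, v i * Y i k) + (1/(1-δ^2)) * Y j k := by
      intro k
      have h1 := hv2 (fun i => X' i k)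
      have h2 : A *ᵥ (fun i => X' i k) = fun i => Y i k := (hcol A X' k).symm
      rw [h2] at h1
      exact h1
    have habs : ∀ k, |X' j k| ≤ (∑ i, |v i| * |Y i k|) + (1/(1-δ^2)) * |Y j k| := by
      intro k
      rw [hXjk k]
      calc |(∑ i, v i * Y i k) + (1/(1-δ^2)) * Y j k|
          ≤ |∑ i, v i * Y i k| + |(1/(1-δ^2)) * Y j k| := abs_add_le _ _
      _ ≤ (∑ i, |v i| * |Y i k|) + (1/(1-δ^2)) * |Y j k| := by
          gcongr
          · calc |∑ i, v i * Y i k| ≤ ∑ i, |v i * Y i k| := Finset.abs_sum_le_sum_abs _ _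
            _ = ∑ i, |v i| * |Y i k| := by
                apply Finset.sum_congr rfl
                intro i _
                rw [abs_mul]
          · rw [abs_mul, abs_of_pos (by positivity : (0:ℝ) < 1/(1-δ^2))]
    have hsumabs : ∑ k, |X' j k| ≤ (∑ i, |v i|) * N + (1/(1-δ^2)) * N := by
      calc ∑ k, |X' j k| ≤ ∑ k, ((∑ i, |v i| * |Y i k|) + (1/(1-δ^2)) * |Y j k|) :=
        Finset.sum_le_sum (fun k _ => habs k)
      _ = (∑ i, |v i| * (∑ k, |Y i k|)) + (1/(1-δ^2)) * (∑ k, |Y j k|) := by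
          rw [Finset.sum_add_distrib, Finset.sum_comm, ← Finset.mul_sum]
          congr 1
          apply Finset.sum_congr rfl
          intro i _
          rw [Finset.mul_sum]
      _ ≤ (∑ i, |v i| * N) + (1/(1-δ^2)) * N := by
          refine add_le_add (Finset.sum_le_sum fun i _ => ?_)
            (mul_le_mul_of_nonneg_left (hrowN j) (by positivity))
          exact mul_le_mul_of_nonneg_left (hrowN i) (abs_nonneg _)
      _ = (∑ i, |v i|) * N + (1/(1-δ^2)) * N := by rw [Finset.sum_mul]
    have hCS : (∑ i, |v i|) ≤ Real.sqrt s * (δ/(1-δ^2)) := by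
      have h1 : (∑ i, |v i|)^2 ≤ (s : ℝ) * ∑ i, (v i)^2 := by
        have := Finset.sum_mul_sq_le_sq_mul_sq Finset.univ (fun _ => (1:ℝ)) (fun i => |v i|)
        simp only [one_mul, one_pow] at this
        calc (∑ i, |v i|)^2 ≤ (∑ _i : {j // j ∈ S \ St}, (1:ℝ)) * ∑ i, |v i|^2 := this
        _ = (s:ℝ) * ∑ i, (v i)^2 := by
            rw [Finset.sum_const, Finset.card_univ, hcard]
            simp [sq_abs]
      have h2 : (∑ i, |v i|)^2 ≤ (s : ℝ) * (δ/(1-δ^2))^2 := by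
        calc (∑ i, |v i|)^2 ≤ (s : ℝ) * ∑ i, (v i)^2 := h1
        _ ≤ (s : ℝ) * (δ/(1-δ^2))^2 := by
            apply mul_le_mul_of_nonneg_left hv1 (Nat.cast_nonneg _)
      have h3 : (0:ℝ) ≤ ∑ i, |v i| := Finset.sum_nonneg (fun i _ => abs_nonneg _)
      calc (∑ i, |v i|) = Real.sqrt ((∑ i, |v i|)^2) := (Real.sqrt_sq h3).symm
      _ ≤ Real.sqrt ((s : ℝ) * (δ/(1-δ^2))^2) := Real.sqrt_le_sqrt h2
      _ = Real.sqrt s * (δ/(1-δ^2)) := by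
          rw [Real.sqrt_mul (Nat.cast_nonneg _), Real.sqrt_sq (by positivity)]
    calc ∑ k, |X' j k| ≤ (∑ i, |v i|) * N + (1/(1-δ^2)) * N := hsumabs
    _ ≤ (Real.sqrt s * (δ/(1-δ^2))) * N + (1/(1-δ^2)) * N := by
        gcongr
    _ = ((1 + Real.sqrt s * δ)/(1-δ^2)) * N := by ring
  -- conclude
  have hsup : infNorm X' ≤ ((1 + Real.sqrt s * δ)/(1-δ^2)) * N := by
    rw [infNorm]
    exact ciSup_le hmain
  rw [hscast]
  have hden : (0:ℝ) < 1 + Real.sqrt s * δ := by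
    have := Real.sqrt_nonneg (s:ℝ)
    nlinarith
  have hC0 : (0:ℝ) ≤ (1 - δ) * (1 + δ) / (1 + Real.sqrt s * δ) := by
    apply div_nonneg (by nlinarith) (le_of_lt hden)
  calc ((1 - δ) * (1 + δ) / (1 + Real.sqrt s * δ)) * infNorm X'
      ≤ ((1 - δ) * (1 + δ) / (1 + Real.sqrt s * δ)) * (((1 + Real.sqrt s * δ)/(1-δ^2)) * N) :=
        mul_le_mul_of_nonneg_left hsup hC0
  _ = N := by
      field_simp
      ring
end

section
/- Let Φ ∈ ℝ^{m×n} satisfy the RIP of order |S| with constant δ_{|S|} < 1, let S_t ⊆ S, J_t = S \ S_t, and let P be the orthogonal projector onto the column span of Φ_{S_t}. Then the symmetric matrix M = Φ_{J_t}ᵀ (I − P) Φ_{J_t} has all eigenvalues in the interval [1 − δ_{|S|}, 1 + δ_{|S|}]; in particular M is invertible. -/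
open Matrix
open scoped BigOperators

/-- Extension of a vector indexed by a subtype to the full index set. -/
noncomputable def extJ {n : ℕ} (J : Finset (Fin n)) (x : {j // j ∈ J} → ℝ) : Fin n → ℝ :=
  fun j => if h : j ∈ J then x ⟨j, h⟩ else 0

lemma dot_idem {m : ℕ} (P : Matrix (Fin m) (Fin m) ℝ) (hs : Pᵀ = P) (hi : P * P = P)
    (z : Fin m → ℝ) : z ⬝ᵥ (P *ᵥ z) = (P *ᵥ z) ⬝ᵥ (P *ᵥ z) := by
  have hv : z ᵥ* P = P *ᵥ z := by rw [← mulVec_transpose, hs]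
  conv_lhs => rw [← hi, ← mulVec_mulVec, dotProduct_mulVec, hv]

theorem stmt8 {m n : ℕ} (Φ : Matrix (Fin m) (Fin n) ℝ)
    (S St : Finset (Fin n)) (δ : ℝ) (hδ0 : 0 ≤ δ) (hδ1 : δ < 1)
    (hRIP : RIP Φ S.card δ)
    (hSt : St ⊆ S)
    (P : Matrix (Fin m) (Fin m) ℝ)
    (hPsymm : P.IsHermitian) (hPidem : P * P = P)
    (hPfix : ∀ j ∈ St, P.mulVec (fun i => Φ i j) = fun i => Φ i j)
    (hPrange : ∀ z : Fin m → ℝ, ∃ c : Fin n → ℝ, (∀ j ∉ St, c j = 0) ∧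
      P.mulVec z = Φ.mulVec c)
    (hM : ((colSub Φ (S \ St))ᵀ * (1 - P) * colSub Φ (S \ St)).IsHermitian) :
    (∀ j, 1 - δ ≤ hM.eigenvalues j ∧ hM.eigenvalues j ≤ 1 + δ) ∧
    IsUnit ((colSub Φ (S \ St))ᵀ * (1 - P) * colSub Φ (S \ St)) := by
  classical
  set J : Finset (Fin n) := S \ St with hJdef
  set A := colSub Φ J with hAdef
  set Q : Matrix (Fin m) (Fin m) ℝ := 1 - P with hQdef
  set M := Aᵀ * Q * A with hMdef
  have hPt : Pᵀ = P := by
    calc Pᵀ = Pᴴ := by ext i j; simp [conjTranspose_apply]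
      _ = P := hPsymm.eq
  have hQt : Qᵀ = Q := by
    rw [hQdef, transpose_sub, transpose_one, hPt]
  have hQidem : Q * Q = Q := by
    have h1 : (1 - P) * (1 - P) = 1 - P - P + P * P := by noncomm_ring
    rw [hQdef, h1, hPidem]; abel
  -- facts about extensions
  have hext_sum : ∀ x : {j // j ∈ J} → ℝ,
      ∑ j, (extJ J x j)^2 = ∑ j, (x j)^2 := by
    intro x
    rw [← Finset.sum_subset (Finset.subset_univ J)
      (by intro j _ hj; simp [extJ, hj]),
      ← Finset.sum_coe_sort J (fun j => (extJ J x j)^2)]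
    refine Finset.sum_congr rfl fun j _ => ?_
    simp [extJ, j.2]
  have hAx : ∀ x : {j // j ∈ J} → ℝ, A *ᵥ x = Φ *ᵥ (extJ J x) := by
    intro x; funext i
    show ∑ j : {j // j ∈ J}, Φ i j.1 * x j = ∑ j, Φ i j * extJ J x j
    rw [← Finset.sum_subset (Finset.subset_univ J)
      (by intro j _ hj; simp [extJ, hj]),
      ← Finset.sum_coe_sort J (fun j => Φ i j * extJ J x j)]
    refine Finset.sum_congr rfl fun j _ => ?_
    simp [extJ, j.2]
  -- quadratic form identity
  have hquad : ∀ x : {j // j ∈ J} → ℝ,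
      x ⬝ᵥ (M *ᵥ x) = (A *ᵥ x) ⬝ᵥ (Q *ᵥ (A *ᵥ x)) := by
    intro x
    have h1 : M *ᵥ x = Aᵀ *ᵥ (Q *ᵥ (A *ᵥ x)) := by
      rw [hMdef, ← mulVec_mulVec, ← mulVec_mulVec]
    rw [h1, dotProduct_mulVec, vecMul_transpose]
  -- upper bound on the quadratic form
  have hup : ∀ x : {j // j ∈ J} → ℝ, x ⬝ᵥ (M *ᵥ x) ≤ (1 + δ) * ∑ j, (x j)^2 := by
    intro x
    set z := A *ᵥ x with hz
    have hQz : z ⬝ᵥ (Q *ᵥ z) = z ⬝ᵥ z - z ⬝ᵥ (P *ᵥ z) := by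
      have h : Q *ᵥ z = z - P *ᵥ z := by rw [hQdef, sub_mulVec, one_mulVec]
      rw [h, dotProduct_sub]
    have hPz : 0 ≤ z ⬝ᵥ (P *ᵥ z) := by
      rw [dot_idem P hPt hPidem]
      exact Finset.sum_nonneg fun i _ => mul_self_nonneg _
    have hzz : z ⬝ᵥ z = ∑ i, (Φ.mulVec (extJ J x) i)^2 := by
      rw [hz, hAx x]; simp [dotProduct, pow_two]
    have hsp : Sparse S.card (extJ J x) :=
      ⟨J, Finset.card_le_card (by rw [hJdef]; exact Finset.sdiff_subset),
        fun j hj => by simp [extJ, hj]⟩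
    have hr := (hRIP (extJ J x) hsp).2
    rw [hext_sum x] at hr
    calc x ⬝ᵥ (M *ᵥ x) = z ⬝ᵥ (Q *ᵥ z) := hquad x
      _ ≤ z ⬝ᵥ z := by rw [hQz]; linarith
      _ ≤ (1 + δ) * ∑ j, (x j)^2 := by rw [hzz]; exact hr
  -- lower bound on the quadratic form
  have hlow : ∀ x : {j // j ∈ J} → ℝ, (1 - δ) * ∑ j, (x j)^2 ≤ x ⬝ᵥ (M *ᵥ x) := by
    intro x
    set z := A *ᵥ x with hz
    obtain ⟨c, hc0, hcP⟩ := hPrange z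
    have hQz : Q *ᵥ z = Φ *ᵥ (extJ J x - c) := by
      rw [hQdef, sub_mulVec, one_mulVec, hcP, hz, hAx x, ← mulVec_sub]
    have hsp : Sparse S.card (extJ J x - c) := by
      refine ⟨S, le_refl _, fun j hj => ?_⟩
      have hjJ : j ∉ J := fun h => hj (by rw [hJdef] at h; exact Finset.sdiff_subset h)
      have hjSt : j ∉ St := fun h => hj (hSt h)
      simp [extJ, hjJ, hc0 j hjSt]
    have hRle := (hRIP (extJ J x - c) hsp).1
    have hsum : ∑ j, (x j)^2 ≤ ∑ j, ((extJ J x - c) j)^2 := by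
      have h1 : ∑ j, (x j)^2 = ∑ j ∈ J, ((extJ J x - c) j)^2 := by
        rw [← Finset.sum_coe_sort J (fun j => ((extJ J x - c) j)^2)]
        refine Finset.sum_congr rfl fun j _ => ?_
        have hjSt : (j : Fin n) ∉ St := (Finset.mem_sdiff.mp j.2).2
        simp [extJ, j.2, hc0 _ hjSt]
      rw [h1]
      exact Finset.sum_le_sum_of_subset_of_nonneg (Finset.subset_univ J)
        (fun j _ _ => sq_nonneg _)
    have hq : (Q *ᵥ z) ⬝ᵥ (Q *ᵥ z) = ∑ i, (Φ.mulVec (extJ J x - c) i)^2 := by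
      rw [hQz]; simp [dotProduct, pow_two]
    calc (1 - δ) * ∑ j, (x j)^2
        ≤ (1 - δ) * ∑ j, ((extJ J x - c) j)^2 :=
          mul_le_mul_of_nonneg_left hsum (by linarith)
      _ ≤ ∑ i, (Φ.mulVec (extJ J x - c) i)^2 := hRle
      _ = (Q *ᵥ z) ⬝ᵥ (Q *ᵥ z) := hq.symm
      _ = z ⬝ᵥ (Q *ᵥ z) := (dot_idem Q hQt hQidem z).symm
      _ = x ⬝ᵥ (M *ᵥ x) := (hquad x).symm
  -- eigenvalue bounds
  have hbound : ∀ j, 1 - δ ≤ hM.eigenvalues j ∧ hM.eigenvalues j ≤ 1 + δ := by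
    intro j
    set v : {j // j ∈ J} → ℝ := ⇑(hM.eigenvectorBasis j) with hv
    have hev : M *ᵥ v = hM.eigenvalues j • v := hM.mulVec_eigenvectorBasis j
    have hnorm : ∑ i, (v i)^2 = 1 := by
      have h1 : ‖hM.eigenvectorBasis j‖ = 1 := hM.eigenvectorBasis.orthonormal.1 j
      have h2 := EuclideanSpace.norm_eq (hM.eigenvectorBasis j)
      rw [h1] at h2
      have h3 : ∑ i, ‖hM.eigenvectorBasis j i‖^2 = 1 := Real.sqrt_eq_one.mp h2.symm
      simpa [Real.norm_eq_abs, sq_abs] using h3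
    have hvv : v ⬝ᵥ v = 1 := by rw [← hnorm]; simp [dotProduct, pow_two]
    have hdot : v ⬝ᵥ (M *ᵥ v) = hM.eigenvalues j := by
      rw [hev, dotProduct_smul, hvv]; simp
    constructor
    · have h := hlow v; rw [hdot, hnorm, mul_one] at h; exact h
    · have h := hup v; rw [hdot, hnorm, mul_one] at h; exact h
  refine ⟨hbound, ?_⟩
  have hdet : M.det ≠ 0 := by
    rw [hM.det_eq_prod_eigenvalues]
    refine Finset.prod_ne_zero_iff.mpr fun j _ => ?_
    have h := (hbound j).1
    have : (0:ℝ) < hM.eigenvalues j := by linarith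
    simpa using ne_of_gt this
  exact (Matrix.isUnit_iff_isUnit_det M).mpr (isUnit_iff_ne_zero.mpr hdet)
end

section
/- Under the main theorem's hypotheses (Φ satisfying RIP of order |S| with δ_{|S|} < 1, supp(X) ⊆ S, S_t ⊂ S, J_t = S \ S_t, R = (I−P)ΦX with P the projector onto span of Φ_{S_t}), the state-of-the-art bound ‖Φ_Sᵀ R‖_{∞→∞} ≥ (1−δ_{|S|}) · ‖X^{J_t}‖_F / √(|S|−t) holds, where t = |S_t|. -/
open Matrix
open scoped BigOperators

lemma cs_sqrt {ι : Type*} (s : Finset ι) (f g : ι → ℝ) :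
    ∑ i ∈ s, f i * g i ≤ Real.sqrt (∑ i ∈ s, f i ^ 2) * Real.sqrt (∑ i ∈ s, g i ^ 2) := by
  calc ∑ i ∈ s, f i * g i ≤ |∑ i ∈ s, f i * g i| := le_abs_self _
    _ = Real.sqrt ((∑ i ∈ s, f i * g i) ^ 2) := (Real.sqrt_sq_eq_abs _).symm
    _ ≤ Real.sqrt ((∑ i ∈ s, f i ^ 2) * ∑ i ∈ s, g i ^ 2) :=
        Real.sqrt_le_sqrt (Finset.sum_mul_sq_le_sq_mul_sq s f g)
    _ = _ := Real.sqrt_mul (Finset.sum_nonneg fun i _ => sq_nonneg _) _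

lemma l2_le_l1 {ι : Type*} [Fintype ι] (v : ι → ℝ) :
    Real.sqrt (∑ k, (v k)^2) ≤ ∑ k, |v k| := by
  have h1 : ∑ k, (v k)^2 = ∑ k, |v k|^2 := by simp [sq_abs]
  rw [h1]
  calc Real.sqrt (∑ k, |v k|^2) ≤ Real.sqrt ((∑ k, |v k|)^2) :=
        Real.sqrt_le_sqrt (Finset.sum_sq_le_sq_sum_of_nonneg fun i _ => abs_nonneg _)
    _ = ∑ k, |v k| := Real.sqrt_sq (Finset.sum_nonneg fun i _ => abs_nonneg _)

/-- Theorem 2 (state of the art): Frobenius-norm based lower bound. -/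
theorem stmt11 {m n K : ℕ} (Φ : Matrix (Fin m) (Fin n) ℝ)
    (S St : Finset (Fin n)) (δ : ℝ) (hδ0 : 0 ≤ δ) (hδ1 : δ < 1)
    (hRIP : RIP Φ S.card δ)
    (X : Matrix (Fin n) (Fin K) ℝ) (hsupp : ∀ j ∉ S, ∀ k, X j k = 0)
    (hSt : St ⊂ S)
    (P : Matrix (Fin m) (Fin m) ℝ)
    (hPsymm : P.IsHermitian) (hPidem : P * P = P)
    (hPfix : ∀ j ∈ St, P.mulVec (fun i => Φ i j) = fun i => Φ i j)
    (hPrange : ∀ z : Fin m → ℝ, ∃ c : Fin n → ℝ, (∀ j ∉ St, c j = 0) ∧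
      P.mulVec z = Φ.mulVec c)
    (R : Matrix (Fin m) (Fin K) ℝ) (hR : R = (1 - P) * (Φ * X)) :
    (1 - δ) * frobNorm (rowSub X (S \ St)) / Real.sqrt ((S.card : ℝ) - St.card) ≤
      infNorm ((colSub Φ S)ᵀ * R) := by
  have hStS : St ⊆ S := hSt.subset
  have hδ' : (0:ℝ) ≤ 1 - δ := by linarith
  set J : Finset (Fin n) := S \ St with hJ
  obtain ⟨j0, hj0S, hj0St⟩ := Finset.exists_of_ssubset hSt
  have hj0J : j0 ∈ J := Finset.mem_sdiff.2 ⟨hj0S, hj0St⟩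
  set A := infNorm ((colSub Φ S)ᵀ * R) with hAdef
  -- A bounds row ℓ¹ sums
  have hrow : ∀ j, j ∈ S → ∑ k, |∑ i, Φ i j * R i k| ≤ A := by
    intro j hj
    have h := le_ciSup (f := fun p : {j // j ∈ S} => ∑ k, |((colSub Φ S)ᵀ * R) p k|)
      (Finite.bddAbove_range _) ⟨j, hj⟩
    simpa [hAdef, infNorm, Matrix.mul_apply, Matrix.transpose_apply, colSub] using h
  have hA0 : 0 ≤ A :=
    le_trans (Finset.sum_nonneg fun k _ => abs_nonneg _) (hrow j0 hj0S)
  -- the truncated signal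
  set x : Fin K → Fin n → ℝ := fun k j => if j ∈ St then 0 else X j k with hx
  set y : Fin K → Fin m → ℝ := fun k => Φ.mulVec (x k) with hy
  set z : Fin K → Fin m → ℝ := fun k => y k - P.mulVec (y k) with hz
  have hPs : ∀ i l, P i l = P l i := by
    intro i l
    have := hPsymm.apply l i
    simpa using this
  have hfix : ∀ c : Fin n → ℝ, (∀ j ∉ St, c j = 0) →
      P.mulVec (Φ.mulVec c) = Φ.mulVec c := by
    intro c hc
    rw [Matrix.mulVec_mulVec]
    funext i
    simp only [Matrix.mulVec, dotProduct]
    refine Finset.sum_congr rfl fun j _ => ?_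
    by_cases hj : j ∈ St
    · have h := congrFun (hPfix j hj) i
      simp only [Matrix.mulVec, dotProduct] at h
      rw [Matrix.mul_apply, h]
    · rw [hc j hj, mul_zero, mul_zero]
  -- columns of R
  have hRcol : ∀ k i, R i k = z k i := by
    intro k i
    have h2 : R i k = (Φ.mulVec (fun j => X j k)
        - P.mulVec (Φ.mulVec (fun j => X j k))) i := by
      rw [hR, Matrix.sub_mul, Matrix.one_mul, Matrix.sub_apply, Pi.sub_apply,
        Matrix.mulVec_mulVec]
      congr 1
      simp only [Matrix.mul_apply, Matrix.mulVec, dotProduct, Finset.mul_sum,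
        Finset.sum_mul]
      rw [Finset.sum_comm]
      exact Finset.sum_congr rfl fun j _ => Finset.sum_congr rfl fun l _ => by ring
    have hsplit : (fun j => X j k) = x k + fun j => if j ∈ St then X j k else 0 := by
      funext j; by_cases hj : j ∈ St <;> simp [hx, hj]
    rw [h2, hsplit, Matrix.mulVec_add, Matrix.mulVec_add,
      hfix _ (fun j hj => if_neg hj)]
    simp only [hz, hy, Pi.sub_apply, Pi.add_apply]
    ring
  -- ⟨x_k, (Φᵀ R)_k⟩ = ⟨y_k, z_k⟩
  have hT1 : ∀ k, ∑ j, x k j * (∑ i, Φ i j * R i k) = ∑ i, y k i * z k i := by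
    intro k
    calc ∑ j, x k j * (∑ i, Φ i j * R i k)
        = ∑ j, ∑ i, Φ i j * x k j * z k i := by
          refine Finset.sum_congr rfl fun j _ => ?_
          rw [Finset.mul_sum]
          exact Finset.sum_congr rfl fun i _ => by rw [hRcol k i]; ring
      _ = ∑ i, ∑ j, Φ i j * x k j * z k i := Finset.sum_comm
      _ = ∑ i, y k i * z k i := by
          refine Finset.sum_congr rfl fun i _ => ?_
          simp only [hy, Matrix.mulVec, dotProduct, Finset.sum_mul]
  -- P annihilates z
  have hPz : ∀ k, P.mulVec (z k) = 0 := by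
    intro k
    simp only [hz]
    rw [Matrix.mulVec_sub, Matrix.mulVec_mulVec (y k) P P, hPidem, sub_self]
  have hT2 : ∀ k, ∑ i, y k i * z k i = ∑ i, (z k i)^2 := by
    intro k
    have h0 : ∑ i, P.mulVec (y k) i * z k i = 0 := by
      have heq : ∑ i, P.mulVec (y k) i * z k i = ∑ l, y k l * P.mulVec (z k) l := by
        simp only [Matrix.mulVec, dotProduct, Finset.sum_mul, Finset.mul_sum]
        rw [Finset.sum_comm]
        refine Finset.sum_congr rfl fun l _ => Finset.sum_congr rfl fun i _ => ?_
        rw [hPs i l]; ring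
      rw [heq, hPz k]
      simp
    have hsum : ∑ i, y k i * z k i = ∑ i, ((z k i)^2 + P.mulVec (y k) i * z k i) := by
      refine Finset.sum_congr rfl fun i _ => ?_
      have hyi : y k i = z k i + P.mulVec (y k) i := by
        simp only [hz, Pi.sub_apply]; ring
      rw [hyi]; ring
    rw [hsum, Finset.sum_add_distrib, h0, add_zero]
  -- RIP-based lower bound
  have hD : ∀ k, (1 - δ) * ∑ j, (x k j)^2 ≤ ∑ i, (z k i)^2 := by
    intro k
    obtain ⟨c, hc0, hcP⟩ := hPrange (y k)
    have hzk : z k = Φ.mulVec (x k - c) := by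
      rw [Matrix.mulVec_sub]
      simp only [hz, hcP, hy]
      rw [← hcP]
    have hsp : Sparse S.card (x k - c) := by
      refine ⟨S, le_rfl, fun j hj => ?_⟩
      have hjSt : j ∉ St := fun h => hj (hStS h)
      have h1 : x k j = 0 := by simp only [hx]; rw [if_neg hjSt]; exact hsupp j hj k
      have h2 : c j = 0 := hc0 j hjSt
      simp [Pi.sub_apply, h1, h2]
    have hrip := (hRIP _ hsp).1
    have hge : ∑ j, (x k j)^2 ≤ ∑ j, ((x k - c) j)^2 := by
      refine Finset.sum_le_sum fun j _ => ?_
      by_cases hj : j ∈ St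
      · have hx0 : x k j = 0 := by simp [hx, hj]
        simp only [Pi.sub_apply, hx0, zero_sub, neg_sq]
        simpa using sq_nonneg (c j)
      · have hc' : c j = 0 := hc0 j hj
        simp [Pi.sub_apply, hc']
    calc (1 - δ) * ∑ j, (x k j)^2 ≤ (1 - δ) * ∑ j, ((x k - c) j)^2 :=
          mul_le_mul_of_nonneg_left hge hδ'
      _ ≤ ∑ i, (Φ.mulVec (x k - c) i)^2 := hrip
      _ = ∑ i, (z k i)^2 := by rw [← hzk]
  -- Frobenius norm bookkeeping
  set F := frobNorm (rowSub X J) with hFdef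
  have hF0 : 0 ≤ F := Real.sqrt_nonneg _
  have hF2 : F^2 = ∑ j ∈ J, ∑ k, (X j k)^2 := by
    rw [hFdef, frobNorm, Real.sq_sqrt (by positivity)]
    rw [← Finset.sum_coe_sort J (fun j => ∑ k, (X j k)^2)]
    rfl
  have hxsum : ∀ k, ∑ j, (x k j)^2 = ∑ j ∈ J, (X j k)^2 := by
    intro k
    rw [← Finset.sum_subset (Finset.subset_univ J)]
    · refine Finset.sum_congr rfl fun j hj => ?_
      have hjSt : j ∉ St := (Finset.mem_sdiff.1 hj).2
      simp [hx, hjSt]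
    · intro j _ hj
      have hx0 : x k j = 0 := by
        by_cases hjSt : j ∈ St
        · simp [hx, hjSt]
        · have hjS : j ∉ S := fun h => hj (Finset.mem_sdiff.2 ⟨h, hjSt⟩)
          simp [hx, hjSt, hsupp j hjS k]
      simp [hx0]
  -- main chain
  have hmain : (1 - δ) * F^2 ≤ Real.sqrt (J.card) * F * A := by
    have step1 : (1 - δ) * F^2 ≤ ∑ k, ∑ i, (z k i)^2 := by
      rw [hF2, Finset.sum_comm, Finset.mul_sum]
      refine Finset.sum_le_sum fun k _ => ?_
      rw [← hxsum k]
      exact hD k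
    have step2 : ∑ k, ∑ i, (z k i)^2 = ∑ j ∈ J, ∑ k, X j k * (∑ i, Φ i j * R i k) := by
      have e1 : ∑ k, ∑ i, (z k i)^2 = ∑ k : Fin K, ∑ j, x k j * (∑ i, Φ i j * R i k) := by
        refine Finset.sum_congr rfl fun k _ => ?_
        rw [hT1 k, hT2 k]
      rw [e1, Finset.sum_comm]
      rw [← Finset.sum_subset (Finset.subset_univ J)]
      · refine Finset.sum_congr rfl fun j hj => Finset.sum_congr rfl fun k _ => ?_
        have hjSt : j ∉ St := (Finset.mem_sdiff.1 hj).2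
        simp [hx, hjSt]
      · intro j _ hj
        refine Finset.sum_eq_zero fun k _ => ?_
        have hx0 : x k j = 0 := by
          by_cases hjSt : j ∈ St
          · simp [hx, hjSt]
          · have hjS : j ∉ S := fun h => hj (Finset.mem_sdiff.2 ⟨h, hjSt⟩)
            simp [hx, hjSt, hsupp j hjS k]
        simp [hx0]
    have step3 : ∑ j ∈ J, ∑ k, X j k * (∑ i, Φ i j * R i k) ≤
        (∑ j ∈ J, Real.sqrt (∑ k, (X j k)^2)) * A := by
      rw [Finset.sum_mul]
      refine Finset.sum_le_sum fun j hj => ?_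
      have hjS : j ∈ S := (Finset.mem_sdiff.1 hj).1
      calc ∑ k, X j k * (∑ i, Φ i j * R i k)
          ≤ Real.sqrt (∑ k, (X j k)^2) *
            Real.sqrt (∑ k, (∑ i, Φ i j * R i k)^2) := cs_sqrt _ _ _
        _ ≤ Real.sqrt (∑ k, (X j k)^2) * A := by
            refine mul_le_mul_of_nonneg_left ?_ (Real.sqrt_nonneg _)
            exact le_trans (l2_le_l1 _) (hrow j hjS)
    have step4 : ∑ j ∈ J, Real.sqrt (∑ k, (X j k)^2) ≤ Real.sqrt (J.card) * F := by
      have := cs_sqrt J (fun _ => (1:ℝ)) (fun j => Real.sqrt (∑ k, (X j k)^2))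
      simp only [one_mul, one_pow] at this
      calc ∑ j ∈ J, Real.sqrt (∑ k, (X j k)^2)
          ≤ Real.sqrt (∑ _j ∈ J, (1:ℝ)) *
            Real.sqrt (∑ j ∈ J, (Real.sqrt (∑ k, (X j k)^2))^2) := this
        _ = Real.sqrt (J.card) * F := by
            congr 1
            · congr 1; simp
            · rw [show ∑ j ∈ J, (Real.sqrt (∑ k, (X j k)^2))^2 = ∑ j ∈ J, ∑ k, (X j k)^2
                from Finset.sum_congr rfl fun j _ =>
                  Real.sq_sqrt (Finset.sum_nonneg fun _ _ => sq_nonneg _),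
                ← hF2, Real.sqrt_sq hF0]
    calc (1 - δ) * F^2 ≤ ∑ j ∈ J, ∑ k, X j k * (∑ i, Φ i j * R i k) := by
          rw [← step2]; exact step1
      _ ≤ (∑ j ∈ J, Real.sqrt (∑ k, (X j k)^2)) * A := step3
      _ ≤ Real.sqrt (J.card) * F * A := by
          exact mul_le_mul_of_nonneg_right step4 hA0
  -- wrap up
  have hcard : Real.sqrt ((S.card : ℝ) - St.card) = Real.sqrt (J.card) := by
    congr 1
    rw [hJ, Finset.card_sdiff_of_subset hStS, Nat.cast_sub (Finset.card_le_card hStS)]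
  have hJpos : (0:ℝ) < Real.sqrt (J.card) := by
    apply Real.sqrt_pos.2
    exact_mod_cast Finset.card_pos.2 ⟨j0, hj0J⟩
  rw [hcard, div_le_iff₀ hJpos]
  rcases eq_or_lt_of_le hF0 with hF | hF
  · rw [← hF]
    simpa using mul_nonneg hA0 hJpos.le
  · nlinarith [hmain, hF, mul_pos hF hF]
end
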